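/- Let m be a 4×4 unitary matrix with det m = 1. Then the characteristic polynomial of m is s⁴ − tr(m)·s³ + (1/2)(tr(m)² − tr(m²))·s² − conj(tr(m))·s + 1, where conj denotes complex conjugation. -/

import Mathlib

open Matrix Polynomial

theorem det_fin_four' {R : Type*} [CommRing R] (A : Matrix (Fin 4) (Fin 4) R) :
    A.det =
      A 0 0 * (A 1 1 * (A 2 2 * A 3 3 - A 2 3 * A 3 2) - A 1 2 * (A 2 1 * A 3 3 - A 2 3 * A 3 1)
        + A 1 3 * (A 2 1 * A 3 2 - A 2 2 * A 3 1))
      - A 0 1 * (A 1 0 * (A 2 2 * A 3 3 - A 2 3 * A 3 2) - A 1 2 * (A 2 0 * A 3 3 - A 2 3 * A 3 0)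
        + A 1 3 * (A 2 0 * A 3 2 - A 2 2 * A 3 0))
      + A 0 2 * (A 1 0 * (A 2 1 * A 3 3 - A 2 3 * A 3 1) - A 1 1 * (A 2 0 * A 3 3 - A 2 3 * A 3 0)
        + A 1 3 * (A 2 0 * A 3 1 - A 2 1 * A 3 0))
      - A 0 3 * (A 1 0 * (A 2 1 * A 3 2 - A 2 2 * A 3 1) - A 1 1 * (A 2 0 * A 3 2 - A 2 2 * A 3 0)
        + A 1 2 * (A 2 0 * A 3 1 - A 2 1 * A 3 0)) := by
  rw [show A = !![A 0 0, A 0 1, A 0 2, A 0 3; A 1 0, A 1 1, A 1 2, A 1 3;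
      A 2 0, A 2 1, A 2 2, A 2 3; A 3 0, A 3 1, A 3 2, A 3 3] from by
    ext i j; fin_cases i <;> fin_cases j <;> rfl]
  simp (config := { decide := true }) [Matrix.det_succ_row_zero, Fin.sum_univ_succ,
    Fin.succAbove, Fin.castSucc, Fin.castAdd, Fin.castLE, Fin.succ]
  ring

theorem adjugate_trace_fin_four (m : Matrix (Fin 4) (Fin 4) ℂ) :
    m.adjugate.trace =
      (m 1 1 * (m 2 2 * m 3 3 - m 2 3 * m 3 2) - m 1 2 * (m 2 1 * m 3 3 - m 2 3 * m 3 1)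
        + m 1 3 * (m 2 1 * m 3 2 - m 2 2 * m 3 1))
      + (m 0 0 * (m 2 2 * m 3 3 - m 2 3 * m 3 2) - m 0 2 * (m 2 0 * m 3 3 - m 2 3 * m 3 0)
        + m 0 3 * (m 2 0 * m 3 2 - m 2 2 * m 3 0))
      + (m 0 0 * (m 1 1 * m 3 3 - m 1 3 * m 3 1) - m 0 1 * (m 1 0 * m 3 3 - m 1 3 * m 3 0)
        + m 0 3 * (m 1 0 * m 3 1 - m 1 1 * m 3 0))
      + (m 0 0 * (m 1 1 * m 2 2 - m 1 2 * m 2 1) - m 0 1 * (m 1 0 * m 2 2 - m 1 2 * m 2 0)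
        + m 0 2 * (m 1 0 * m 2 1 - m 1 1 * m 2 0)) := by
  simp only [Matrix.trace, Matrix.diag, Fin.sum_univ_four, Matrix.adjugate_apply, det_fin_four']
  simp (config := { decide := true }) [Matrix.updateRow_apply, Pi.single_apply]
  ring

set_option maxHeartbeats 2000000 in
theorem charpoly_fin_four' (m : Matrix (Fin 4) (Fin 4) ℂ) :
    m.charpoly = X^4 - C m.trace * X^3 + C ((m.trace^2 - (m*m).trace)/2) * X^2
      - C m.adjugate.trace * X + C m.det := by
  have h2 : (m.trace^2 - (m*m).trace)/2 =
      (m 0 0 * m 1 1 - m 0 1 * m 1 0) + (m 0 0 * m 2 2 - m 0 2 * m 2 0)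
      + (m 0 0 * m 3 3 - m 0 3 * m 3 0) + (m 1 1 * m 2 2 - m 1 2 * m 2 1)
      + (m 1 1 * m 3 3 - m 1 3 * m 3 1) + (m 2 2 * m 3 3 - m 2 3 * m 3 2) := by
    simp only [Matrix.trace, Matrix.diag, Matrix.mul_apply, Fin.sum_univ_four]
    field_simp
    ring
  have htr4 : m.trace = m 0 0 + m 1 1 + m 2 2 + m 3 3 := by
    simp [Matrix.trace, Fin.sum_univ_four]
  rw [h2, htr4, adjugate_trace_fin_four, det_fin_four' m, Matrix.charpoly, det_fin_four']
  simp (config := { decide := true }) only [Matrix.charmatrix_apply, Matrix.diagonal_apply,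
    if_true, if_false, reduceIte, sub_zero, zero_sub,
    _root_.map_add, _root_.map_mul, _root_.map_sub, _root_.map_neg, _root_.map_one]
  ring

/-- For a 4×4 unitary matrix m with det m = 1, the characteristic polynomial is
s⁴ − tr(m)s³ + (1/2)(tr²(m) − tr(m²))s² − conj(tr m)·s + 1. -/
theorem charpoly_of_unitary_det_one (m : Matrix (Fin 4) (Fin 4) ℂ)
    (hm : mᴴ * m = 1) (hdet : m.det = 1) :
    m.charpoly =
      X ^ 4 - C m.trace * X ^ 3 +
        C ((m.trace ^ 2 - (m * m).trace) / 2) * X ^ 2 -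
        C ((starRingEnd ℂ) m.trace) * X + 1 := by
  have key : mᴴ = m.adjugate := by
    have h1 : mᴴ = m⁻¹ := (Matrix.inv_eq_left_inv hm).symm
    rw [h1, Matrix.inv_def, hdet]
    simp
  have htr : (starRingEnd ℂ) m.trace = m.adjugate.trace := by
    rw [← key, Matrix.trace_conjTranspose]
    rfl
  rw [htr, charpoly_fin_four', hdet, Polynomial.C_1]
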